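/- arXiv:1806.05181 — 3 statements merged into one kernel-verified Lean document; each statement's English description precedes it below -/
import Mathlib

section
/- Let G=(V,E) be an undirected graph on V={1,...,N}, and for each node i let f_i : R^n -> R, h_i : R^n -> R^{m_i^E}, g_i : R^n -> R^{m_i^I} be C^2 functions. Then for every i, every x in R^{Nn}, every choice of multipliers and positive penalty parameters, the gradients with respect to the block x_i of the global and of the i-th local augmented Lagrangian exist and coincide: grad_{x_i} L_p(x,theta) = grad_{x_i} Ltilde_i(x_{N_i}, theta_{N_i}). -/
/-!
Only the terms of `L_p` involving the block `x_i` vary with it: the node term of `i` and, for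
each neighbour `j`, the two edge terms `ν_ij^T (x_i - x_j) + ρ_ij/2 ‖x_i - x_j‖²` and
`ν_ji^T (x_j - x_i) + ρ_ji/2 ‖x_j - x_i‖²`. Their sum is the `j`-th summand of `L̃_i` up to the
constant `(ν_ji - ν_ij)^T x_j`, so `L_p - L̃_i` does not depend on `x_i`, and the two functions
have the same differentiability and gradient in `x_i`. `L̃_i` is differentiable because
`t ↦ max{0,t}²` is `C¹` with derivative `2 max{0,t}`.
-/

open scoped RealInnerProductSpace

/-- Componentwise penalty term `1ᵀ q_c(a,b)` where
`q_c(a,b) = (1/(2c)) (max{0, a + c b}² - a²)`. -/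
noncomputable def qpen {m : ℕ} (c : ℝ) (a b : EuclideanSpace ℝ (Fin m)) : ℝ :=
  ∑ k, (1 / (2 * c)) * ((max 0 (a k + c * b k)) ^ 2 - (a k) ^ 2)

open scoped Topology
open Function Finset Asymptotics

theorem hasDerivAt_max_zero_sq (t : ℝ) :
    HasDerivAt (fun s : ℝ => max 0 s ^ 2) (2 * max 0 t) t := by
  rcases lt_trichotomy t 0 with ht | rfl | ht
  · have hzero : (fun s : ℝ => max 0 s ^ 2) =ᶠ[𝓝 t] fun _ => 0 := by
      filter_upwards [eventually_lt_nhds ht] with s hs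
      simp [hs.le]
    simpa [ht.le] using (hasDerivAt_const t (0 : ℝ)).congr_of_eventuallyEq hzero
  · rw [hasDerivAt_iff_isLittleO_nhds_zero]
    refine IsBigO.trans_isLittleO (IsBigO.of_bound' (Filter.Eventually.of_forall fun s => ?_))
      (isLittleO_pow_id one_lt_two)
    rcases le_total s 0 with hs | hs <;> simp [hs, sq_nonneg]
  · have hsq : (fun s : ℝ => max 0 s ^ 2) =ᶠ[𝓝 t] fun s => s ^ 2 := by
      filter_upwards [eventually_gt_nhds ht] with s hs
      simp [hs.le]
    simpa [ht.le] using (hasDerivAt_pow 2 t).congr_of_eventuallyEq hsq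

theorem DifferentiableAt.qpen {E : Type*} [NormedAddCommGroup E] [NormedSpace ℝ E] {m : ℕ}
    {c : ℝ} {a : EuclideanSpace ℝ (Fin m)} {b : E → EuclideanSpace ℝ (Fin m)} {x : E}
    (hb : DifferentiableAt ℝ b x) : DifferentiableAt ℝ (fun v => _root_.qpen c a (b v)) x := by
  unfold _root_.qpen
  have hcomp : ∀ k, DifferentiableAt ℝ (fun v => max 0 (a k + c * b v k) ^ 2) x := fun k =>
    (hasDerivAt_max_zero_sq _).differentiableAt.comp x (by fun_prop)
  fun_prop

theorem Fintype.sum_apply_update_sub {V X M : Type*} [Fintype V] [DecidableEq V] [AddCommGroup M]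
    (φ : V → X → M) (x : V → X) (i : V) (v : X) :
    ∑ a, φ a (update x i v a) - φ i v = ∑ a, φ a (x a) - φ i (x i) := by
  simp only [apply_update φ x i v, sum_update_of_mem (mem_univ i),
    Fintype.sum_eq_add_sum_compl i (fun a => φ a (x a))]
  abel

namespace SimpleGraph

variable {V X M : Type*} [Fintype V] [DecidableEq V] [AddCommGroup M]
  (G : SimpleGraph V) [DecidableRel G.Adj]

theorem sum_sum_neighborFinset_update (e : V → V → X → X → M) (x : V → X) (i : V) (v : X) :
    ∑ a, ∑ j ∈ G.neighborFinset a, e a j (update x i v a) (update x i v j) =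
      ∑ a, ∑ j ∈ G.neighborFinset a, e a j (x a) (x j) +
        ∑ j ∈ G.neighborFinset i,
          (e i j v (x j) - e i j (x i) (x j) + (e j i (x j) v - e j i (x j) (x i))) := by
  have hedge : ∀ a, ∀ j ∈ G.neighborFinset a, e a j (update x i v a) (update x i v j) =
      e a j (x a) (x j) + (if a = i then e i j v (x j) - e i j (x i) (x j) else 0) +
        (if j = i then e a i (x a) v - e a i (x a) (x i) else 0) := by
    intro a j hj
    have hne : a ≠ j := G.ne_of_adj ((G.mem_neighborFinset a j).1 hj)
    by_cases ha : a = i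
    · subst ha
      simp [hne.symm]
    by_cases hji : j = i
    · subst hji
      simp [ha]
    · simp [ha, hji]
  have hfilter : univ.filter (fun a => i ∈ G.neighborFinset a) = G.neighborFinset i := by
    ext a
    simp [G.adj_comm]
  rw [sum_congr rfl fun a _ => sum_congr rfl (hedge a)]
  simp only [sum_add_distrib, sum_ite_irrel, sum_const_zero, sum_ite_eq', mem_univ, if_true,
    ← sum_filter, hfilter, add_assoc]

end SimpleGraph

theorem differentiableAt_and_gradient_eq_of_sub_eq_const {E : Type*} [NormedAddCommGroup E]
    [InnerProductSpace ℝ E] [CompleteSpace E] {F L : E → ℝ} {x : E} {C : ℝ}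
    (hL : DifferentiableAt ℝ L x) (hFL : ∀ v, F v - L v = C) :
    DifferentiableAt ℝ F x ∧ DifferentiableAt ℝ L x ∧ gradient F x = gradient L x := by
  obtain rfl : F = fun v => L v + C := funext fun v => eq_add_of_sub_eq' (hFL v)
  exact ⟨hL.add_const C, hL, by simp only [gradient, fderiv_add_const]⟩

section AugmentedLagrangian

variable {V E : Type*} [Fintype V] [NormedAddCommGroup E] [InnerProductSpace ℝ E]
  (G : SimpleGraph V) [DecidableRel G.Adj] {mE mI : V → ℕ} (f : V → E → ℝ)
  (h : ∀ a, E → EuclideanSpace ℝ (Fin (mE a))) (g : ∀ a, E → EuclideanSpace ℝ (Fin (mI a)))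
  (ν : V → V → E) (lam : ∀ a, EuclideanSpace ℝ (Fin (mE a)))
  (μ : ∀ a, EuclideanSpace ℝ (Fin (mI a))) (ρ : V → V → ℝ) (ϱ ζ : V → ℝ)

noncomputable def augmentedLagrangian (y : V → E) : ℝ :=
  ∑ a, (f a (y a)
    + (∑ j ∈ G.neighborFinset a, (⟪ν a j, y a - y j⟫ + ρ a j / 2 * ‖y a - y j‖ ^ 2))
    + ⟪lam a, h a (y a)⟫ + ϱ a / 2 * ‖h a (y a)‖ ^ 2 + qpen (ζ a) (μ a) (g a (y a)))

noncomputable def localAugmentedLagrangian (x : V → E) (i : V) (v : E) : ℝ :=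
  f i v + (∑ j ∈ G.neighborFinset i, (⟪v, ν i j - ν j i⟫ + (ρ i j + ρ j i) / 2 * ‖v - x j‖ ^ 2))
    + ⟪lam i, h i v⟫ + ϱ i / 2 * ‖h i v‖ ^ 2 + qpen (ζ i) (μ i) (g i v)

theorem differentiableAt_localAugmentedLagrangian (x : V → E) (i : V) {p : E}
    (hf : DifferentiableAt ℝ (f i) p) (hh : DifferentiableAt ℝ (h i) p)
    (hg : DifferentiableAt ℝ (g i) p) :
    DifferentiableAt ℝ (localAugmentedLagrangian G f h g ν lam μ ρ ϱ ζ x i) p := by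
  unfold localAugmentedLagrangian
  refine (((hf.add (.fun_sum fun j _ => .add ?_ ?_)).add ?_).add ?_).add hg.qpen
  · exact differentiableAt_id.inner ℝ (differentiableAt_const _)
  · exact ((differentiableAt_id.sub_const _).norm_sq ℝ).const_mul _
  · exact (differentiableAt_const _).inner ℝ hh
  · exact (hh.norm_sq ℝ).const_mul _

theorem augmentedLagrangian_update_sub_local [DecidableEq V] (x : V → E) (i : V) (v : E) :
    augmentedLagrangian G f h g ν lam μ ρ ϱ ζ (update x i v)
        - localAugmentedLagrangian G f h g ν lam μ ρ ϱ ζ x i v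
      = augmentedLagrangian G f h g ν lam μ ρ ϱ ζ x
        - localAugmentedLagrangian G f h g ν lam μ ρ ϱ ζ x i (x i) := by
  set φ : V → E → ℝ := fun a w =>
    f a w + ⟪lam a, h a w⟫ + ϱ a / 2 * ‖h a w‖ ^ 2 + qpen (ζ a) (μ a) (g a w)
  set e : V → V → E → E → ℝ := fun a j p q => ⟪ν a j, p - q⟫ + ρ a j / 2 * ‖p - q‖ ^ 2
  set ℓ : V → E → ℝ := fun j p => ⟪p, ν i j - ν j i⟫ + (ρ i j + ρ j i) / 2 * ‖p - x j‖ ^ 2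
  have hglobal : ∀ y, augmentedLagrangian G f h g ν lam μ ρ ϱ ζ y =
      ∑ a, φ a (y a) + ∑ a, ∑ j ∈ G.neighborFinset a, e a j (y a) (y j) := fun y => by
    rw [← sum_add_distrib]
    exact sum_congr rfl fun a _ => by ring
  have hlocal : ∀ p, localAugmentedLagrangian G f h g ν lam μ ρ ϱ ζ x i p =
      φ i p + ∑ j ∈ G.neighborFinset i, ℓ j p := fun p => by
    simp only [localAugmentedLagrangian, φ, ℓ]
    ring
  have hpair : ∀ j, e i j v (x j) - e i j (x i) (x j) + (e j i (x j) v - e j i (x j) (x i)) =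
      ℓ j v - ℓ j (x i) := fun j => by
    simp only [e, ℓ, inner_sub_right, norm_sub_rev (x j), real_inner_comm]
    ring
  rw [hglobal, hglobal, hlocal, hlocal, G.sum_sum_neighborFinset_update,
    sum_congr rfl fun j _ => hpair j, sum_sub_distrib]
  linear_combination Fintype.sum_apply_update_sub φ x i v

end AugmentedLagrangian

theorem gradient_global_eq_gradient_local_general
    (N n : ℕ) (G : SimpleGraph (Fin N)) [DecidableRel G.Adj]
    (mE mI : Fin N → ℕ)
    (f : Fin N → EuclideanSpace ℝ (Fin n) → ℝ)
    (h : (i : Fin N) → EuclideanSpace ℝ (Fin n) → EuclideanSpace ℝ (Fin (mE i)))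
    (g : (i : Fin N) → EuclideanSpace ℝ (Fin n) → EuclideanSpace ℝ (Fin (mI i)))
    (hf : ∀ i, ContDiff ℝ 2 (f i)) (hh : ∀ i, ContDiff ℝ 2 (h i))
    (hg : ∀ i, ContDiff ℝ 2 (g i))
    (ν : Fin N → Fin N → EuclideanSpace ℝ (Fin n))
    (lam : (i : Fin N) → EuclideanSpace ℝ (Fin (mE i)))
    (μ : (i : Fin N) → EuclideanSpace ℝ (Fin (mI i)))
    (ρ : Fin N → Fin N → ℝ) (ϱ ζ : Fin N → ℝ)
    (i : Fin N) (x : Fin N → EuclideanSpace ℝ (Fin n)) :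
    DifferentiableAt ℝ
      (fun v : EuclideanSpace ℝ (Fin n) =>
        ∑ a, (f a (Function.update x i v a)
          + (∑ j ∈ G.neighborFinset a,
              (⟪ν a j, Function.update x i v a - Function.update x i v j⟫
                + ρ a j / 2 * ‖Function.update x i v a - Function.update x i v j‖ ^ 2))
          + ⟪lam a, h a (Function.update x i v a)⟫
          + ϱ a / 2 * ‖h a (Function.update x i v a)‖ ^ 2
          + qpen (ζ a) (μ a) (g a (Function.update x i v a)))) (x i)
    ∧
    DifferentiableAt ℝ
      (fun v : EuclideanSpace ℝ (Fin n) =>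
        f i v
          + (∑ j ∈ G.neighborFinset i,
              (⟪v, ν i j - ν j i⟫ + (ρ i j + ρ j i) / 2 * ‖v - x j‖ ^ 2))
          + ⟪lam i, h i v⟫ + ϱ i / 2 * ‖h i v‖ ^ 2
          + qpen (ζ i) (μ i) (g i v)) (x i)
    ∧
    gradient
      (fun v : EuclideanSpace ℝ (Fin n) =>
        ∑ a, (f a (Function.update x i v a)
          + (∑ j ∈ G.neighborFinset a,
              (⟪ν a j, Function.update x i v a - Function.update x i v j⟫
                + ρ a j / 2 * ‖Function.update x i v a - Function.update x i v j‖ ^ 2))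
          + ⟪lam a, h a (Function.update x i v a)⟫
          + ϱ a / 2 * ‖h a (Function.update x i v a)‖ ^ 2
          + qpen (ζ a) (μ a) (g a (Function.update x i v a)))) (x i)
    =
    gradient
      (fun v : EuclideanSpace ℝ (Fin n) =>
        f i v
          + (∑ j ∈ G.neighborFinset i,
              (⟪v, ν i j - ν j i⟫ + (ρ i j + ρ j i) / 2 * ‖v - x j‖ ^ 2))
          + ⟪lam i, h i v⟫ + ϱ i / 2 * ‖h i v‖ ^ 2
          + qpen (ζ i) (μ i) (g i v)) (x i) := by
  have hloc := differentiableAt_localAugmentedLagrangian G f h g ν lam μ ρ ϱ ζ x i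
    ((hf i).differentiable two_ne_zero (x i)) ((hh i).differentiable two_ne_zero (x i))
    ((hg i).differentiable two_ne_zero (x i))
  -- the two functions of the statement unfold to `augmentedLagrangian … (update x i ·)` and
  -- `localAugmentedLagrangian … x i`
  exact differentiableAt_and_gradient_eq_of_sub_eq_const hloc
    (augmentedLagrangian_update_sub_local G f h g ν lam μ ρ ϱ ζ x i)

/-- For every node `i` and every point, the function of the block `x i` obtained from the
global augmented Lagrangian and the `i`-th local augmented Lagrangian are both differentiable
at `x i` and have the same gradient there. -/
theorem gradient_global_eq_gradient_local
    (N n : ℕ) (G : SimpleGraph (Fin N)) [DecidableRel G.Adj]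
    (mE mI : Fin N → ℕ)
    (f : Fin N → EuclideanSpace ℝ (Fin n) → ℝ)
    (h : (i : Fin N) → EuclideanSpace ℝ (Fin n) → EuclideanSpace ℝ (Fin (mE i)))
    (g : (i : Fin N) → EuclideanSpace ℝ (Fin n) → EuclideanSpace ℝ (Fin (mI i)))
    (hf : ∀ i, ContDiff ℝ 2 (f i)) (hh : ∀ i, ContDiff ℝ 2 (h i))
    (hg : ∀ i, ContDiff ℝ 2 (g i))
    (ν : Fin N → Fin N → EuclideanSpace ℝ (Fin n))
    (lam : (i : Fin N) → EuclideanSpace ℝ (Fin (mE i)))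
    (μ : (i : Fin N) → EuclideanSpace ℝ (Fin (mI i)))
    (hμ : ∀ i k, 0 ≤ μ i k)
    (ρ : Fin N → Fin N → ℝ) (ϱ ζ : Fin N → ℝ)
    (hρ : ∀ i j, G.Adj i j → 0 < ρ i j)
    (hϱ : ∀ i, 0 < ϱ i) (hζ : ∀ i, 0 < ζ i)
    (i : Fin N) (x : Fin N → EuclideanSpace ℝ (Fin n)) :
    DifferentiableAt ℝ
      (fun v : EuclideanSpace ℝ (Fin n) =>
        ∑ a, (f a (Function.update x i v a)
          + (∑ j ∈ G.neighborFinset a,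
              (⟪ν a j, Function.update x i v a - Function.update x i v j⟫
                + ρ a j / 2 * ‖Function.update x i v a - Function.update x i v j‖ ^ 2))
          + ⟪lam a, h a (Function.update x i v a)⟫
          + ϱ a / 2 * ‖h a (Function.update x i v a)‖ ^ 2
          + qpen (ζ a) (μ a) (g a (Function.update x i v a)))) (x i)
    ∧
    DifferentiableAt ℝ
      (fun v : EuclideanSpace ℝ (Fin n) =>
        f i v
          + (∑ j ∈ G.neighborFinset i,
              (⟪v, ν i j - ν j i⟫ + (ρ i j + ρ j i) / 2 * ‖v - x j‖ ^ 2))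
          + ⟪lam i, h i v⟫ + ϱ i / 2 * ‖h i v‖ ^ 2
          + qpen (ζ i) (μ i) (g i v)) (x i)
    ∧
    gradient
      (fun v : EuclideanSpace ℝ (Fin n) =>
        ∑ a, (f a (Function.update x i v a)
          + (∑ j ∈ G.neighborFinset a,
              (⟪ν a j, Function.update x i v a - Function.update x i v j⟫
                + ρ a j / 2 * ‖Function.update x i v a - Function.update x i v j‖ ^ 2))
          + ⟪lam a, h a (Function.update x i v a)⟫
          + ϱ a / 2 * ‖h a (Function.update x i v a)‖ ^ 2
          + qpen (ζ a) (μ a) (g a (Function.update x i v a)))) (x i)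
    =
    gradient
      (fun v : EuclideanSpace ℝ (Fin n) =>
        f i v
          + (∑ j ∈ G.neighborFinset i,
              (⟪v, ν i j - ν j i⟫ + (ρ i j + ρ j i) / 2 * ‖v - x j‖ ^ 2))
          + ⟪lam i, h i v⟫ + ϱ i / 2 * ‖h i v‖ ^ 2
          + qpen (ζ i) (μ i) (g i v)) (x i) :=
  gradient_global_eq_gradient_local_general N n G mE mI f h g hf hh hg ν lam μ ρ ϱ ζ i x
end

section
/- Consider the asynchronous distributed logic-AND dynamics on a finite connected undirected graph G=(V,E) with diameter d_G: each node i holds a Boolean matrix S_i(t) in {0,1}^{d_G x d_i} (columns indexed by its neighbors j in N_i and a last column d_i), initialized to all zeros, and a flag C_i(t) in {0,1}; a sequence of awakenings (i_t)_{t in N} is such that there exists Tbar with every node awakening at least once in every window of Tbar consecutive times; when node i awakens at time t it sets S_i[1,d_i] <- C_i(t), then S_i[l,d_i] <- prod_{b=1}^{d_i} S_i[l-1,b] for l = 2,...,d_G (using the already-updated entries), and each neighbor j in N_i replaces its column corresponding to i with the updated last column S_i[:,d_i]; all other entries are unchanged. If there exists a time T0 such that C_j(t) = 1 for all j in V and all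 t >= T0, then there exists a finite time t* such that prod_{b=1}^{d_ell} S_ell[d_G, b](t*) = 1 for every node ell in V. -/
/-- The new self-column computed by an awakening node in the asynchronous logic-AND:
row `0` (paper row 1) gets the flag `c`; row `l+1` (paper row `l+2`) is the logical
product of all entries of row `l`, i.e. the (old) neighbor entries `nbr l` of row `l`
together with the already-updated self entry `newCol c nbr l`. -/
def newCol (c : Prop) (nbr : ℕ → Prop) : ℕ → Prop
  | 0 => c
  | l + 1 => newCol c nbr l ∧ nbr l

/-- Asynchronous distributed logic-AND, sufficiency: if from some time on all flags
`C j` are `1` forever, then in finite time the last row (row `d_G`, index `d_G - 1`)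
of every node's matrix consists of all `1`s. -/
theorem logicAND_complete
    (N : ℕ) (G : SimpleGraph (Fin N)) [DecidableRel G.Adj]
    (hconn : G.Connected)
    (dG : ℕ) (hdG : dG = G.diam) (hdG1 : 1 ≤ dG)
    -- `S t i l j` : entry of node `i`'s matrix at time `t`, row `l` (`l = 0` is paper
    -- row 1, meaningful for `l < dG`), column associated to node `j` (`j = i` is the
    -- self column `d_i`, `j` adjacent to `i` are the neighbor columns).
    (S : ℕ → Fin N → ℕ → Fin N → Prop)
    (C : ℕ → Fin N → Prop)
    (awake : ℕ → Fin N)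
    (hinit : ∀ i l j, ¬ S 0 i l j)
    -- update rule: when node `awake t` wakes up, its self column is replaced by
    -- `newCol` and each neighbor copies that column into the column it associates
    -- with `awake t`; every other entry is unchanged.
    (hupd : ∀ t (a : Fin N) (l : ℕ) (b : Fin N),
      ((b = awake t ∧ (a = awake t ∨ G.Adj (awake t) a)) →
        (S (t + 1) a l b ↔ newCol (C t (awake t))
          (fun m => ∀ j, G.Adj (awake t) j → S t (awake t) m j) l)) ∧
      (¬ (b = awake t ∧ (a = awake t ∨ G.Adj (awake t) a)) →
        (S (t + 1) a l b ↔ S t a l b)))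
    -- local timers: every node awakens at least once in every window of length `Tbar`
    (Tbar : ℕ)
    (htimer : ∀ (i : Fin N) (t : ℕ), ∃ s, t ≤ s ∧ s < t + Tbar ∧ awake s = i)
    (hC : ∃ T0 : ℕ, ∀ (j : Fin N) (t : ℕ), T0 ≤ t → C t j) :
    ∃ tstar : ℕ, ∀ ℓ b : Fin N, (b = ℓ ∨ G.Adj ℓ b) → S tstar ℓ (dG - 1) b := by
  obtain ⟨T0, hT0⟩ := hC
  suffices h : ∀ l : ℕ, ∃ T, T0 ≤ T ∧ ∀ t, T ≤ t → ∀ i b : Fin N,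
      (b = i ∨ G.Adj i b) → ∀ m, m ≤ l → S t i m b by
    obtain ⟨T, _, hT⟩ := h (dG - 1)
    exact ⟨T, fun ℓ b hb => hT T le_rfl ℓ b hb _ le_rfl⟩
  have step : ∀ (l T' : ℕ), T0 ≤ T' →
      (∀ t, T' ≤ t → ∀ i b : Fin N, (b = i ∨ G.Adj i b) → ∀ m, m < l → S t i m b) →
      ∀ t, T' + Tbar ≤ t → ∀ i b : Fin N, (b = i ∨ G.Adj i b) → ∀ m, m ≤ l → S t i m b := by
    intro l T' hT' hlow
    have hnew : ∀ t, T' ≤ t → ∀ m, m ≤ l →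
        newCol (C t (awake t)) (fun m => ∀ j, G.Adj (awake t) j → S t (awake t) m j) m := by
      intro t ht m
      induction m with
      | zero => intro _; exact hT0 (awake t) t (le_trans hT' ht)
      | succ m ih =>
        intro hml
        exact ⟨ih (Nat.le_of_succ_le hml),
          fun j hj => hlow t ht (awake t) j (Or.inr hj) m (Nat.lt_of_succ_le hml)⟩
    have hpersist : ∀ s t, T' ≤ s → s ≤ t → ∀ (i b : Fin N) (m : ℕ), m ≤ l →
        S s i m b → S t i m b := by
      intro s t hs hst i b m hm hS
      induction t, hst using Nat.le_induction with
      | base => exact hS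
      | succ u hu ih =>
        by_cases hcase : b = awake u ∧ (i = awake u ∨ G.Adj (awake u) i)
        · exact ((hupd u i m b).1 hcase).mpr (hnew u (le_trans hs hu) m hm)
        · exact ((hupd u i m b).2 hcase).mpr ih
    intro t ht i b hside m hm
    obtain ⟨s, hs1, hs2, hsb⟩ := htimer b (t - Tbar)
    have hs' : T' ≤ s := by omega
    have hst : s + 1 ≤ t := by omega
    have hcase : b = awake s ∧ (i = awake s ∨ G.Adj (awake s) i) := by
      refine ⟨hsb.symm, ?_⟩
      rcases hside with h | h
      · exact Or.inl (h ▸ hsb.symm)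
      · exact Or.inr (hsb ▸ h.symm)
    have h1 : S (s + 1) i m b := ((hupd s i m b).1 hcase).mpr (hnew s hs' m hm)
    exact hpersist (s + 1) t (le_trans hs' (Nat.le_succ s)) hst i b m hm h1
  intro l
  induction l with
  | zero =>
    exact ⟨T0 + Tbar, Nat.le_add_right _ _,
      step 0 T0 le_rfl (fun t _ i b _ m hm => absurd hm (Nat.not_lt_zero m))⟩
  | succ l ih =>
    obtain ⟨T, hT0T, hT⟩ := ih
    exact ⟨T + Tbar, le_trans hT0T (Nat.le_add_right _ _),
      step (l + 1) T hT0T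
        (fun t ht i b hside m hm => hT t ht i b hside m (Nat.lt_succ_iff.mp hm))⟩
end

section
/- Consider the asynchronous distributed logic-AND dynamics on a finite connected undirected graph G=(V,E) with diameter d_G (state matrices S_i in {0,1}^{d_G x d_i} initialized to zero, flags C_i(t), one node awakening per time step with the update rule: S_i[1,d_i] <- C_i(t); S_i[l,d_i] <- prod_{b=1}^{d_i} S_i[l-1,b] for l = 2,...,d_G; then each neighbor j copies S_i[:,d_i] into its column for i). If at some time t a node ell satisfies prod_{b=1}^{d_ell} S_ell[d_G, b](t) = 1, then every node j in V must have had C_j(t') = 1 at some time t' <= t. -/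
lemma newCol_imp_flag {c : Prop} {nbr : ℕ → Prop} : ∀ l, newCol c nbr l → c
  | 0, h => h
  | l + 1, h => newCol_imp_flag l h.1

namespace SimpleGraph

variable {V : Type*} {G : SimpleGraph V}

lemma Connected.eq_or_exists_adj_dist_le (hconn : G.Connected) {v u : V} {l : ℕ}
    (h : G.dist v u ≤ l + 1) : v = u ∨ ∃ w, G.Adj v w ∧ G.dist w u ≤ l := by
  obtain ⟨p, hp⟩ := (hconn v u).exists_walk_length_eq_dist
  cases p with
  | nil => exact Or.inl rfl
  | cons hadj q =>
    have hq := dist_le q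
    rw [Walk.length_cons] at hp
    exact Or.inr ⟨_, hadj, by omega⟩

end SimpleGraph

section LogicAND

variable {V : Type*} {G : SimpleGraph V}

def FlagRaisedBy (C : ℕ → V → Prop) (t : ℕ) (u : V) : Prop :=
  ∃ t', t' ≤ t ∧ C t' u

lemma FlagRaisedBy.mono {C : ℕ → V → Prop} {t s : ℕ} {u : V} (h : FlagRaisedBy C t u)
    (hts : t ≤ s) : FlagRaisedBy C s u :=
  let ⟨t', ht', hC⟩ := h
  ⟨t', ht'.trans hts, hC⟩

lemma newCol_imp_flagRaisedBy (hconn : G.Connected) {C : ℕ → V → Prop} {t : ℕ} {v : V}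
    {nbr : ℕ → Prop}
    (hnbr : ∀ l, nbr l → ∀ w, G.Adj v w → ∀ u, G.dist w u ≤ l → FlagRaisedBy C t u) :
    ∀ l, newCol (C t v) nbr l → ∀ u, G.dist v u ≤ l → FlagRaisedBy C t u
  | 0, h, u, hdist => by
    rw [← hconn.dist_eq_zero_iff.mp (Nat.le_zero.mp hdist)]
    exact ⟨t, le_rfl, newCol_imp_flag 0 h⟩
  | l + 1, h, u, hdist => by
    rcases hconn.eq_or_exists_adj_dist_le hdist with rfl | ⟨w, hvw, hwu⟩
    · exact ⟨t, le_rfl, newCol_imp_flag _ h⟩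
    · exact hnbr l h.2 w hvw u hwu

lemma flagRaisedBy_of_state (hconn : G.Connected)
    {S : ℕ → V → ℕ → V → Prop} {C : ℕ → V → Prop} {awake : ℕ → V}
    (hinit : ∀ i l j, ¬ S 0 i l j)
    (hupd : ∀ t (a : V) (l : ℕ) (b : V),
      ((b = awake t ∧ (a = awake t ∨ G.Adj (awake t) a)) →
        (S (t + 1) a l b ↔ newCol (C t (awake t))
          (fun m => ∀ j, G.Adj (awake t) j → S t (awake t) m j) l)) ∧
      (¬ (b = awake t ∧ (a = awake t ∨ G.Adj (awake t) a)) →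
        (S (t + 1) a l b ↔ S t a l b))) :
    ∀ t a l b, S t a l b → ∀ u, G.dist b u ≤ l → FlagRaisedBy C t u
  | 0, a, l, b, h => absurd h (hinit a l b)
  | t + 1, a, l, b, h => by
    have ih := flagRaisedBy_of_state hconn hinit hupd t
    by_cases hwritten : b = awake t ∧ (a = awake t ∨ G.Adj (awake t) a)
    · obtain ⟨rfl, ha⟩ := hwritten
      have hcol := ((hupd t a l _).1 ⟨rfl, ha⟩).mp h
      intro u hdist
      exact (newCol_imp_flagRaisedBy hconn (fun m hm w hvw => ih _ m w (hm w hvw)) l hcol u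
        hdist).mono t.le_succ
    · intro u hdist
      exact (ih a l b (((hupd t a l b).2 hwritten).mp h) u hdist).mono t.le_succ

end LogicAND
theorem logicAND_sound_general
    (N : ℕ) (G : SimpleGraph (Fin N))
    (hconn : G.Connected)
    (dG : ℕ) (hdG : dG = G.diam)
    (S : ℕ → Fin N → ℕ → Fin N → Prop)
    (C : ℕ → Fin N → Prop)
    (awake : ℕ → Fin N)
    (hinit : ∀ i l j, ¬ S 0 i l j)
    (hupd : ∀ t (a : Fin N) (l : ℕ) (b : Fin N),
      ((b = awake t ∧ (a = awake t ∨ G.Adj (awake t) a)) →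
        (S (t + 1) a l b ↔ newCol (C t (awake t))
          (fun m => ∀ j, G.Adj (awake t) j → S t (awake t) m j) l)) ∧
      (¬ (b = awake t ∧ (a = awake t ∨ G.Adj (awake t) a)) →
        (S (t + 1) a l b ↔ S t a l b)))
    (t : ℕ) (ℓ : Fin N)
    (hrow : ∀ b : Fin N, (b = ℓ ∨ G.Adj ℓ b) → S t ℓ (dG - 1) b) :
    ∀ j : Fin N, ∃ t' : ℕ, t' ≤ t ∧ C t' j := by
  intro j
  have : Nonempty (Fin N) := hconn.nonempty
  have hdiam : G.dist ℓ j ≤ G.diam := G.dist_le_diam (G.connected_iff_ediam_ne_top.mp hconn)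
  have hball : G.dist ℓ j ≤ dG - 1 + 1 := by omega
  rcases hconn.eq_or_exists_adj_dist_le hball with rfl | ⟨w, hℓw, hwj⟩
  · exact flagRaisedBy_of_state hconn hinit hupd t _ _ _ (hrow _ (Or.inl rfl)) _
      (by simp)
  · exact flagRaisedBy_of_state hconn hinit hupd t _ _ _ (hrow w (Or.inr hℓw)) j hwj

/-- Asynchronous distributed logic-AND, necessity: if at time `t` some node `ℓ` has its
last row (row `d_G`, index `d_G - 1`) all equal to `1`, then every node `j` must have
had its flag `C j` equal to `1` at some previous time `t' ≤ t`. -/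
theorem logicAND_sound
    (N : ℕ) (G : SimpleGraph (Fin N)) [DecidableRel G.Adj]
    (hconn : G.Connected)
    (dG : ℕ) (hdG : dG = G.diam) (hdG1 : 1 ≤ dG)
    (S : ℕ → Fin N → ℕ → Fin N → Prop)
    (C : ℕ → Fin N → Prop)
    (awake : ℕ → Fin N)
    (hinit : ∀ i l j, ¬ S 0 i l j)
    (hupd : ∀ t (a : Fin N) (l : ℕ) (b : Fin N),
      ((b = awake t ∧ (a = awake t ∨ G.Adj (awake t) a)) →
        (S (t + 1) a l b ↔ newCol (C t (awake t))
          (fun m => ∀ j, G.Adj (awake t) j → S t (awake t) m j) l)) ∧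
      (¬ (b = awake t ∧ (a = awake t ∨ G.Adj (awake t) a)) →
        (S (t + 1) a l b ↔ S t a l b)))
    (t : ℕ) (ℓ : Fin N)
    (hrow : ∀ b : Fin N, (b = ℓ ∨ G.Adj ℓ b) → S t ℓ (dG - 1) b) :
    ∀ j : Fin N, ∃ t' : ℕ, t' ≤ t ∧ C t' j :=
  logicAND_sound_general N G hconn dG hdG S C awake hinit hupd t ℓ hrow
end
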